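/- For any nonempty compact set E ⊆ ℝ^d and θ ∈ (0,1), the real interpolation space (C(E), C^{0,1}(E))_{θ,∞} equals the Hölder space C^{0,θ}(E), with equivalent norms. -/

import Mathlib

open scoped ENNReal

noncomputable section

/-- Sup-norm (of `C(E)`), extended-real valued. -/
def supN {E : Type*} (f : E → ℝ) : ℝ≥0∞ := ⨆ x, ENNReal.ofReal |f x|

/-- `α`-Hölder seminorm `sup_{x ≠ y} |f x - f y| / dist x y ^ α`. -/
def holderSemi {E : Type*} [PseudoMetricSpace E] (α : ℝ) (f : E → ℝ) : ℝ≥0∞ :=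
  ⨆ x, ⨆ y, ⨆ _ : x ≠ y, ENNReal.ofReal (|f x - f y| / dist x y ^ α)

/-- Norm of the Hölder space `C^{0,α}(E)`. -/
def holderNorm {E : Type*} [PseudoMetricSpace E] (α : ℝ) (f : E → ℝ) : ℝ≥0∞ :=
  supN f + holderSemi α f

/-- K-functional of the couple `(C(E), C^{0,1}(E))`. -/
def Kfun {E : Type*} [PseudoMetricSpace E] (t : ℝ≥0∞) (f : E → ℝ) : ℝ≥0∞ :=
  ⨅ g : E → ℝ, ⨅ h : E → ℝ, ⨅ _ : f = g + h ∧ Continuous g,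
    supN g + t * holderNorm 1 h

/-- Norm of the real interpolation space `(C(E), C^{0,1}(E))_{θ,∞}`
(discretized K-method, `sup_{k ∈ ℤ} 2^{-kθ} K(2^k, f)`). -/
def realInterpInftyNorm {E : Type*} [PseudoMetricSpace E] (θ : ℝ) (f : E → ℝ) : ℝ≥0∞ :=
  ⨆ k : ℤ, ((2 : ℝ≥0∞) ^ k) ^ (-θ) * Kfun ((2 : ℝ≥0∞) ^ k) f

/-!
A difference `|f x - f y|` is at most `2 K(t, f)` as soon as `t ≥ dist x y`, since the Lipschitz
part `h` of a splitting `f = g + h` changes by at most `t ‖h‖_{C^{0,1}}` and the continuous part by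
at most `2 ‖g‖_∞`; taking `t = 2^k ≈ dist x y` gives the Hölder bound. Conversely, for `t ≤ 1` split
`f = (f - f_L) + f_L`, where `f_L = inf_y (f y + L dist · y)` is the largest `L`-Lipschitz
minorant of `f` and `L = H t^{θ-1}`, `H` the Hölder constant of `f`: then `0 ≤ f - f_L ≤ H t^θ`,
so `K(t, f) ≲ t^θ ‖f‖_{C^{0,θ}}`.
-/

open scoped NNReal

section SupNorm

variable {E : Type*}

theorem ofReal_abs_le_supN (f : E → ℝ) (x : E) : ENNReal.ofReal |f x| ≤ supN f :=
  le_iSup (fun x => ENNReal.ofReal |f x|) x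

theorem supN_le_ofReal {f : E → ℝ} {M : ℝ} (hM : ∀ x, |f x| ≤ M) : supN f ≤ ENNReal.ofReal M :=
  iSup_le fun x => ENNReal.ofReal_le_ofReal (hM x)

theorem abs_le_toReal_supN {f : E → ℝ} (hf : supN f ≠ ∞) (x : E) : |f x| ≤ (supN f).toReal :=
  (ENNReal.ofReal_le_iff_le_toReal hf).1 (ofReal_abs_le_supN f x)

theorem supN_add_le (g h : E → ℝ) : supN (g + h) ≤ supN g + supN h :=
  iSup_le fun x => calc
    ENNReal.ofReal |g x + h x| ≤ ENNReal.ofReal (|g x| + |h x|) :=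
      ENNReal.ofReal_le_ofReal (abs_add_le _ _)
    _ = ENNReal.ofReal |g x| + ENNReal.ofReal |h x| :=
      ENNReal.ofReal_add (abs_nonneg _) (abs_nonneg _)
    _ ≤ supN g + supN h := add_le_add (ofReal_abs_le_supN g x) (ofReal_abs_le_supN h x)

theorem ofReal_abs_sub_le_two_mul_supN (g : E → ℝ) (x y : E) :
    ENNReal.ofReal |g x - g y| ≤ 2 * supN g := calc
  ENNReal.ofReal |g x - g y| ≤ ENNReal.ofReal (|g x| + |g y|) :=
    ENNReal.ofReal_le_ofReal (abs_sub _ _)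
  _ = ENNReal.ofReal |g x| + ENNReal.ofReal |g y| :=
    ENNReal.ofReal_add (abs_nonneg _) (abs_nonneg _)
  _ ≤ supN g + supN g := add_le_add (ofReal_abs_le_supN g x) (ofReal_abs_le_supN g y)
  _ = 2 * supN g := (two_mul _).symm

end SupNorm

section KFunctional

variable {E : Type*} [PseudoMetricSpace E]

theorem ofReal_div_le_holderSemi (α : ℝ) (f : E → ℝ) {x y : E} (hxy : x ≠ y) :
    ENNReal.ofReal (|f x - f y| / dist x y ^ α) ≤ holderSemi α f :=
  le_iSup₂_of_le x y (le_iSup_of_le hxy le_rfl)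

theorem le_Kfun {f : E → ℝ} {t a : ℝ≥0∞}
    (H : ∀ g h : E → ℝ, f = g + h → Continuous g → a ≤ supN g + t * holderNorm 1 h) :
    a ≤ Kfun t f :=
  le_iInf fun g => le_iInf fun h => le_iInf fun hgh => H g h hgh.1 hgh.2

theorem Kfun_le {f g h : E → ℝ} (hfgh : f = g + h) (hg : Continuous g) (t : ℝ≥0∞) :
    Kfun t f ≤ supN g + t * holderNorm 1 h :=
  iInf_le_of_le g <| iInf_le_of_le h <| iInf_le _ ⟨hfgh, hg⟩

theorem Kfun_le_supN {f : E → ℝ} (hf : Continuous f) (t : ℝ≥0∞) : Kfun t f ≤ supN f := by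
  simpa [holderNorm, holderSemi, supN] using Kfun_le (add_zero f).symm hf t

theorem supN_le_Kfun_one (f : E → ℝ) : supN f ≤ Kfun 1 f :=
  le_Kfun fun g h hfgh _ => calc
    supN f ≤ supN g + supN h := hfgh ▸ supN_add_le g h
    _ ≤ supN g + 1 * holderNorm 1 h := by rw [one_mul]; gcongr; exact le_self_add

theorem le_realInterpInftyNorm (θ : ℝ) (f : E → ℝ) (k : ℤ) :
    ((2 : ℝ≥0∞) ^ k) ^ (-θ) * Kfun ((2 : ℝ≥0∞) ^ k) f ≤ realInterpInftyNorm θ f :=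
  le_iSup (fun k : ℤ => ((2 : ℝ≥0∞) ^ k) ^ (-θ) * Kfun ((2 : ℝ≥0∞) ^ k) f) k

theorem supN_le_realInterpInftyNorm (θ : ℝ) (f : E → ℝ) : supN f ≤ realInterpInftyNorm θ f := by
  simpa using (supN_le_Kfun_one f).trans (by simpa using le_realInterpInftyNorm θ f 0)

end KFunctional

section LowerBound

variable {E : Type*} [MetricSpace E]

theorem holderSemi_le_ofReal {α H : ℝ} {f : E → ℝ}
    (hH : ∀ x y, |f x - f y| ≤ H * dist x y ^ α) : holderSemi α f ≤ ENNReal.ofReal H :=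
  iSup_le fun x => iSup_le fun y => iSup_le fun hxy =>
    ENNReal.ofReal_le_ofReal <| (div_le_iff₀ (by positivity [dist_pos.2 hxy])).2 (hH x y)

theorem abs_sub_le_toReal_holderSemi {α : ℝ} {f : E → ℝ} (hf : holderSemi α f ≠ ∞) (x y : E) :
    |f x - f y| ≤ (holderSemi α f).toReal * dist x y ^ α := by
  rcases eq_or_ne x y with rfl | hxy
  · simp only [sub_self, abs_zero]
    positivity
  have hd : 0 < dist x y ^ α := by positivity [dist_pos.2 hxy]
  rw [← div_le_iff₀ hd, ← ENNReal.ofReal_le_iff_le_toReal hf]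
  exact ofReal_div_le_holderSemi α f hxy

theorem ofReal_abs_sub_le_edist_mul_holderNorm_one (h : E → ℝ) (x y : E) :
    ENNReal.ofReal |h x - h y| ≤ edist x y * holderNorm 1 h := by
  rcases eq_or_ne x y with rfl | hxy
  · simp
  have hd : 0 < dist x y := dist_pos.2 hxy
  calc ENNReal.ofReal |h x - h y|
      = ENNReal.ofReal (dist x y) * ENNReal.ofReal (|h x - h y| / dist x y ^ (1 : ℝ)) := by
        rw [← ENNReal.ofReal_mul hd.le, Real.rpow_one, mul_div_cancel₀ _ hd.ne']
    _ ≤ edist x y * holderSemi 1 h := by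
        rw [edist_dist]
        gcongr
        exact ofReal_div_le_holderSemi 1 h hxy
    _ ≤ edist x y * holderNorm 1 h := by gcongr; exact le_add_self

theorem ofReal_abs_sub_le_two_mul_Kfun (f : E → ℝ) {x y : E} {t : ℝ≥0∞} (hxy : edist x y ≤ t) :
    ENNReal.ofReal |f x - f y| ≤ 2 * Kfun t f := by
  suffices ENNReal.ofReal |f x - f y| / 2 ≤ Kfun t f by
    rwa [ENNReal.div_le_iff two_ne_zero ENNReal.ofNat_ne_top, mul_comm] at this
  refine le_Kfun fun g h hfgh _ => ENNReal.div_le_of_le_mul ?_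
  calc ENNReal.ofReal |f x - f y|
      ≤ ENNReal.ofReal (|g x - g y| + |h x - h y|) := by
        refine ENNReal.ofReal_le_ofReal ?_
        rw [hfgh, Pi.add_apply, Pi.add_apply, add_sub_add_comm]
        exact abs_add_le _ _
    _ = ENNReal.ofReal |g x - g y| + ENNReal.ofReal |h x - h y| :=
        ENNReal.ofReal_add (abs_nonneg _) (abs_nonneg _)
    _ ≤ 2 * supN g + t * holderNorm 1 h :=
        add_le_add (ofReal_abs_sub_le_two_mul_supN g x y)
          ((ofReal_abs_sub_le_edist_mul_holderNorm_one h x y).trans (by gcongr))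
    _ ≤ (supN g + t * holderNorm 1 h) * 2 := by
        rw [mul_two, two_mul, add_add_add_comm]
        gcongr
        exact le_self_add

theorem exists_two_zpow_mem_Icc_edist {x y : E} (hxy : x ≠ y) :
    ∃ k : ℤ, edist x y ≤ (2 : ℝ≥0∞) ^ k ∧ (2 : ℝ≥0∞) ^ k ≤ 2 * edist x y := by
  obtain ⟨n, hlo, hhi⟩ := exists_mem_Ioc_zpow (pos_iff_ne_zero.2 (nndist_eq_zero.not.2 hxy)) (one_lt_two : (1 : ℝ≥0) < 2)
  refine ⟨n + 1, ?_, ?_⟩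
  · rw [edist_nndist, ← ENNReal.coe_ofNat, ← ENNReal.coe_zpow two_ne_zero]
    exact_mod_cast hhi
  · rw [edist_nndist, ← ENNReal.coe_ofNat, ← ENNReal.coe_zpow two_ne_zero, zpow_add_one₀ two_ne_zero,
      mul_comm]
    norm_cast
    gcongr

theorem holderSemi_le_four_mul_realInterpInftyNorm {θ : ℝ} (hθ0 : 0 ≤ θ) (hθ1 : θ ≤ 1)
    (f : E → ℝ) : holderSemi θ f ≤ 4 * realInterpInftyNorm θ f := by
  refine iSup_le fun x => iSup_le fun y => iSup_le fun hxy => ?_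
  obtain ⟨k, hdt, htd⟩ := exists_two_zpow_mem_Icc_edist hxy
  set t : ℝ≥0∞ := 2 ^ k
  set D : ℝ≥0∞ := edist x y ^ θ
  have hd : 0 < dist x y := dist_pos.2 hxy
  have hD : ENNReal.ofReal (dist x y ^ θ) = D := by
    rw [show D = edist x y ^ θ from rfl, edist_dist, ENNReal.ofReal_rpow_of_pos hd]
  have ht : t ≠ ∞ := ENNReal.zpow_ne_top two_ne_zero ENNReal.ofNat_ne_top k
  have ht0 : t ^ θ ≠ 0 := (ENNReal.rpow_pos (ENNReal.zpow_pos two_ne_zero ENNReal.ofNat_ne_top k) ht).ne'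
  have htop : t ^ θ ≠ ∞ := ENNReal.rpow_ne_top_of_nonneg hθ0 ht
  have htD : t ^ θ ≤ 2 * D := calc
    t ^ θ ≤ (2 * edist x y) ^ θ := ENNReal.rpow_le_rpow htd hθ0
    _ = 2 ^ θ * D := ENNReal.mul_rpow_of_nonneg _ _ hθ0
    _ ≤ 2 * D := by
      gcongr
      simpa using ENNReal.rpow_le_rpow_of_exponent_le one_le_two hθ1
  rw [ENNReal.ofReal_div_of_pos (by positivity), hD]
  refine ENNReal.div_le_of_le_mul ?_
  calc ENNReal.ofReal |f x - f y| ≤ 2 * Kfun t f := ofReal_abs_sub_le_two_mul_Kfun f hdt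
    _ = 2 * Kfun t f * (t ^ (-θ) * t ^ θ) := by
      rw [ENNReal.rpow_neg, ENNReal.inv_mul_cancel ht0 htop, mul_one]
    _ ≤ 2 * Kfun t f * (t ^ (-θ) * (2 * D)) := by gcongr
    _ = 4 * (t ^ (-θ) * Kfun t f) * D := by ring
    _ ≤ 4 * realInterpInftyNorm θ f * D := by gcongr; exact le_realInterpInftyNorm θ f k

theorem holderNorm_le_five_mul_realInterpInftyNorm {θ : ℝ} (hθ0 : 0 ≤ θ) (hθ1 : θ ≤ 1)
    (f : E → ℝ) : holderNorm θ f ≤ 5 * realInterpInftyNorm θ f := calc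
  holderNorm θ f ≤ realInterpInftyNorm θ f + 4 * realInterpInftyNorm θ f :=
    add_le_add (supN_le_realInterpInftyNorm θ f) (holderSemi_le_four_mul_realInterpInftyNorm hθ0 hθ1 f)
  _ = 5 * realInterpInftyNorm θ f := by ring

end LowerBound

theorem Real.rpow_le_rpow_add_rpow_sub_one_mul {s τ θ : ℝ} (hs : 0 ≤ s) (hτ : 0 < τ)
    (hθ0 : 0 ≤ θ) (hθ1 : θ ≤ 1) : s ^ θ ≤ τ ^ θ + τ ^ (θ - 1) * s := by
  rcases le_or_gt s τ with hsτ | hτs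
  · have : s ^ θ ≤ τ ^ θ := Real.rpow_le_rpow hs hsτ hθ0
    nlinarith [Real.rpow_nonneg hτ.le (θ - 1)]
  · have hs0 : 0 < s := hτ.trans hτs
    calc s ^ θ = s ^ (θ - 1) * s := by rw [← Real.rpow_add_one hs0.ne', sub_add_cancel]
      _ ≤ τ ^ (θ - 1) * s :=
        mul_le_mul_of_nonneg_right (Real.rpow_le_rpow_of_nonpos hτ hτs.le (by linarith)) hs
      _ ≤ τ ^ θ + τ ^ (θ - 1) * s := le_add_of_nonneg_left (Real.rpow_nonneg hτ.le θ)

section LipschitzMinorant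

variable {E : Type*} [PseudoMetricSpace E] {f : E → ℝ} {L : ℝ≥0}

/-- The largest `L`-Lipschitz minorant of `f` (Pasch–Hausdorff envelope), when `f` is bounded
below. -/
def lipschitzMinorant (L : ℝ≥0) (f : E → ℝ) (x : E) : ℝ :=
  ⨅ y, f y + L * dist x y

theorem bddBelow_range_add_mul_dist {m : ℝ} (hm : ∀ y, m ≤ f y) (L : ℝ≥0) (x : E) :
    BddBelow (Set.range fun y => f y + L * dist x y) :=
  ⟨m, Set.forall_mem_range.2 fun y => le_add_of_le_of_nonneg (hm y) (by positivity)⟩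

theorem le_lipschitzMinorant {m : ℝ} (hm : ∀ y, m ≤ f y) (x : E) :
    m ≤ lipschitzMinorant L f x :=
  have : Nonempty E := ⟨x⟩
  le_ciInf fun y => le_add_of_le_of_nonneg (hm y) (by positivity)

theorem lipschitzMinorant_le {m : ℝ} (hm : ∀ y, m ≤ f y) (x : E) :
    lipschitzMinorant L f x ≤ f x :=
  (ciInf_le (bddBelow_range_add_mul_dist hm L x) x).trans_eq (by simp)

theorem lipschitzWith_lipschitzMinorant {m : ℝ} (hm : ∀ y, m ≤ f y) :
    LipschitzWith L (lipschitzMinorant L f) := by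
  refine LipschitzWith.of_le_add_mul L fun x x' => ?_
  have : Nonempty E := ⟨x⟩
  rw [← sub_le_iff_le_add]
  refine le_ciInf fun y => sub_le_iff_le_add.2 ?_
  calc lipschitzMinorant L f x ≤ f y + L * dist x y :=
        ciInf_le (bddBelow_range_add_mul_dist hm L x) y
    _ ≤ f y + L * dist x' y + L * dist x x' := by
        nlinarith [dist_triangle x x' y, L.coe_nonneg]

theorem sub_lipschitzMinorant_le {C : ℝ} {x : E} (hC : ∀ y, f x - f y ≤ C + L * dist x y) :
    f x - lipschitzMinorant L f x ≤ C := by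
  have : Nonempty E := ⟨x⟩
  rw [sub_le_comm]
  exact le_ciInf fun y => by linarith [hC y]

end LipschitzMinorant

section UpperBound

variable {E : Type*} [MetricSpace E] {f : E → ℝ} {M H θ : ℝ}

theorem Kfun_ofReal_le_of_le_one (hf : Continuous f) (hM0 : 0 ≤ M) (hM : ∀ x, |f x| ≤ M)
    (hH0 : 0 ≤ H) (hH : ∀ x y, |f x - f y| ≤ H * dist x y ^ θ) (hθ0 : 0 ≤ θ) (hθ1 : θ ≤ 1)
    {τ : ℝ} (hτ0 : 0 < τ) (hτ1 : τ ≤ 1) :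
    Kfun (ENNReal.ofReal τ) f ≤ ENNReal.ofReal (τ ^ θ * (2 * H + M)) := by
  set L : ℝ≥0 := ⟨H * τ ^ (θ - 1), by positivity⟩
  set h := lipschitzMinorant L f
  have hfM : ∀ y, -M ≤ f y := fun y => (abs_le.1 (hM y)).1
  have hLip : LipschitzWith L h := lipschitzWith_lipschitzMinorant hfM
  have hgap : ∀ x, f x - h x ≤ H * τ ^ θ := fun x => sub_lipschitzMinorant_le fun y => calc
    f x - f y ≤ H * dist x y ^ θ := (le_abs_self _).trans (hH x y)
    _ ≤ H * (τ ^ θ + τ ^ (θ - 1) * dist x y) := by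
        gcongr
        exact Real.rpow_le_rpow_add_rpow_sub_one_mul dist_nonneg hτ0 hθ0 hθ1
    _ = H * τ ^ θ + L * dist x y := by
        change _ = _ + H * τ ^ (θ - 1) * dist x y
        ring
  have hsup_g : supN (f - h) ≤ ENNReal.ofReal (H * τ ^ θ) := supN_le_ofReal fun x => by
    rw [Pi.sub_apply, abs_of_nonneg (sub_nonneg.2 (lipschitzMinorant_le hfM x))]
    exact hgap x
  have hnorm_h : holderNorm 1 h ≤ ENNReal.ofReal M + ENNReal.ofReal L := by
    refine add_le_add (supN_le_ofReal fun x => abs_le.2 ⟨le_lipschitzMinorant hfM x, ?_⟩)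
      (holderSemi_le_ofReal fun x y => by simpa [Real.dist_eq] using hLip.dist_le_mul x y)
    exact (lipschitzMinorant_le hfM x).trans (le_of_abs_le (hM x))
  have hτθ : τ * τ ^ (θ - 1) = τ ^ θ := by
    rw [mul_comm, ← Real.rpow_add_one hτ0.ne', sub_add_cancel]
  have hτ_le : τ ≤ τ ^ θ := Real.self_le_rpow_of_le_one hτ0.le hτ1 hθ1
  calc Kfun (ENNReal.ofReal τ) f
      ≤ ENNReal.ofReal (H * τ ^ θ) + ENNReal.ofReal τ * (ENNReal.ofReal M + ENNReal.ofReal L) :=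
        (Kfun_le (sub_add_cancel f h).symm (hf.sub hLip.continuous) _).trans (by gcongr)
    _ = ENNReal.ofReal (H * τ ^ θ + τ * (M + H * τ ^ (θ - 1))) := by
        rw [← ENNReal.ofReal_add hM0 L.coe_nonneg, ← ENNReal.ofReal_mul hτ0.le,
          ← ENNReal.ofReal_add (by positivity) (by positivity)]
        rfl
    _ ≤ ENNReal.ofReal (τ ^ θ * (2 * H + M)) := by
        refine ENNReal.ofReal_le_ofReal ?_
        nlinarith

theorem Kfun_ofReal_le (hf : Continuous f) (hM0 : 0 ≤ M) (hM : ∀ x, |f x| ≤ M)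
    (hH0 : 0 ≤ H) (hH : ∀ x y, |f x - f y| ≤ H * dist x y ^ θ) (hθ0 : 0 ≤ θ) (hθ1 : θ ≤ 1)
    {τ : ℝ} (hτ0 : 0 < τ) :
    Kfun (ENNReal.ofReal τ) f ≤ ENNReal.ofReal (τ ^ θ * (2 * H + M)) := by
  rcases le_or_gt τ 1 with hτ1 | hτ1
  · exact Kfun_ofReal_le_of_le_one hf hM0 hM hH0 hH hθ0 hθ1 hτ0 hτ1
  calc Kfun (ENNReal.ofReal τ) f ≤ supN f := Kfun_le_supN hf _
    _ ≤ ENNReal.ofReal M := supN_le_ofReal hM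
    _ ≤ ENNReal.ofReal (τ ^ θ * (2 * H + M)) :=
        ENNReal.ofReal_le_ofReal (by nlinarith [Real.one_le_rpow hτ1.le hθ0])

theorem realInterpInftyNorm_le_two_mul_holderNorm (hf : Continuous f) (hθ0 : 0 ≤ θ)
    (hθ1 : θ ≤ 1) : realInterpInftyNorm θ f ≤ 2 * holderNorm θ f := by
  by_cases hfin : holderNorm θ f = ∞
  · simp [hfin]
  obtain ⟨hsup, hsemi⟩ : supN f ≠ ∞ ∧ holderSemi θ f ≠ ∞ := by
    simpa [holderNorm, not_or] using hfin
  set M := (supN f).toReal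
  set H := (holderSemi θ f).toReal
  have hnorm : holderNorm θ f = ENNReal.ofReal M + ENNReal.ofReal H := by
    rw [holderNorm, ENNReal.ofReal_toReal hsup, ENNReal.ofReal_toReal hsemi]
  refine iSup_le fun k => ?_
  have ht : (2 : ℝ≥0∞) ^ k ≠ ∞ := ENNReal.zpow_ne_top two_ne_zero ENNReal.ofNat_ne_top k
  set τ := ((2 : ℝ≥0∞) ^ k).toReal
  have hτ : 0 < τ :=
    ENNReal.toReal_pos (ENNReal.zpow_pos two_ne_zero ENNReal.ofNat_ne_top k).ne' ht
  rw [← ENNReal.ofReal_toReal ht, ENNReal.ofReal_rpow_of_pos hτ]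
  calc ENNReal.ofReal (τ ^ (-θ)) * Kfun (ENNReal.ofReal τ) f
      ≤ ENNReal.ofReal (τ ^ (-θ)) * ENNReal.ofReal (τ ^ θ * (2 * H + M)) := by
        gcongr
        exact Kfun_ofReal_le hf ENNReal.toReal_nonneg (abs_le_toReal_supN hsup)
          ENNReal.toReal_nonneg (abs_sub_le_toReal_holderSemi hsemi) hθ0 hθ1 hτ
    _ = ENNReal.ofReal (2 * H + M) := by
        rw [← ENNReal.ofReal_mul (by positivity), ← mul_assoc, ← Real.rpow_add hτ,
          neg_add_cancel, Real.rpow_zero, one_mul]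
    _ ≤ 2 * holderNorm θ f := by
        rw [hnorm, ← ENNReal.ofReal_add ENNReal.toReal_nonneg ENNReal.toReal_nonneg,
          ← ENNReal.ofReal_ofNat 2, ← ENNReal.ofReal_mul zero_le_two]
        exact ENNReal.ofReal_le_ofReal (by linarith [ENNReal.toReal_nonneg (a := supN f)])

end UpperBound

theorem stmt_2_general {d : ℕ} (E : Set (EuclideanSpace ℝ (Fin d)))
    (θ : ℝ) (hθ : θ ∈ Set.Ioo (0 : ℝ) 1) :
    ∃ c C : ℝ≥0∞, 0 < c ∧ C < ⊤ ∧ ∀ f : E → ℝ, Continuous f →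
      c * holderNorm θ f ≤ realInterpInftyNorm θ f ∧
      realInterpInftyNorm θ f ≤ C * holderNorm θ f := by
  refine ⟨5⁻¹, 2, by simp, ENNReal.ofNat_lt_top, fun f hf => ⟨?_,
    realInterpInftyNorm_le_two_mul_holderNorm hf hθ.1.le hθ.2.le⟩⟩
  rw [ENNReal.inv_mul_le_iff (by norm_num) (by norm_num)]
  exact holderNorm_le_five_mul_realInterpInftyNorm hθ.1.le hθ.2.le f

/-- For any nonempty compact set `E ⊆ ℝ^d` and `θ ∈ (0,1)`, the real interpolation space
`(C(E), C^{0,1}(E))_{θ,∞}` equals the Hölder space `C^{0,θ}(E)` with equivalent norms: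
the `(θ,∞)` interpolation norm and the `C^{0,θ}` norm are two-sidedly comparable on
continuous functions. -/
theorem stmt_2 {d : ℕ} (E : Set (EuclideanSpace ℝ (Fin d)))
    (hE : IsCompact E) (hne : E.Nonempty) (θ : ℝ) (hθ : θ ∈ Set.Ioo (0 : ℝ) 1) :
    ∃ c C : ℝ≥0∞, 0 < c ∧ C < ⊤ ∧ ∀ f : E → ℝ, Continuous f →
      c * holderNorm θ f ≤ realInterpInftyNorm θ f ∧
      realInterpInftyNorm θ f ≤ C * holderNorm θ f :=
  stmt_2_general E θ hθ

end
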